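/- arXiv:1910.01317 — 6 statements merged into one kernel-verified Lean document; each statement's English description precedes it below -/
import Mathlib

section
/- Let G be a group with subgroups A, B ≤ G such that B normalizes A, A ∩ B = {e}, and G = AB (inner semidirect product G = [AB]), and let φ_A : G → A, φ_B : G → B be the maps assigning to each g ∈ G the unique a ∈ A and b ∈ B with g = a·b. Then for every atomic subset S ⊆ G and every g ∈ ⟨S⟩, one has φ_A(g) ∈ ⟨(S ∩ A)^{⟨S ∩ B⟩}⟩ and φ_B(g) ∈ ⟨S ∩ B⟩, where (S ∩ A)^{⟨S ∩ B⟩} := { b a b⁻¹ : a ∈ S ∩ A, b ∈ ⟨S ∩ B⟩ }. -/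
/-!
If `K = ⟨S ∩ B⟩` and `H = ⟨(S ∩ A)^K⟩`, then `K` normalizes `H`, so `H ⊔ K = H K` as a set.
Every generator of `⟨S⟩` lies in `H ∪ K`, hence `g ∈ ⟨S⟩` factors as `g = h k` with `h ∈ H ≤ A`
and `k ∈ K ≤ B`, and uniqueness of the factorization in `G = [AB]` gives `φA g = h`, `φB g = k`.
-/

namespace Subgroup

variable {G : Type*} [Group G]

theorem eq_and_eq_of_mul_eq_mul {A B : Subgroup G} (hAB : Disjoint A B) {a a' b b' : G}
    (ha : a ∈ A) (ha' : a' ∈ A) (hb : b ∈ B) (hb' : b' ∈ B) (h : a * b = a' * b') :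
    a = a' ∧ b = b' := by
  simpa using @mul_injective_of_disjoint _ _ _ _ hAB (⟨a, ha⟩, ⟨b, hb⟩) (⟨a', ha'⟩, ⟨b', hb'⟩) h

/-- The paper's `T^K`. -/
def conjugatesBy (T : Set G) (K : Subgroup G) : Set G :=
  {x | ∃ a ∈ T, ∃ b ∈ K, x = b * a * b⁻¹}

theorem subset_conjugatesBy (T : Set G) (K : Subgroup G) : T ⊆ conjugatesBy T K :=
  fun a ha => ⟨a, ha, 1, one_mem K, by group⟩

theorem le_normalizer_closure_conjugatesBy (T : Set G) (K : Subgroup G) :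
    K ≤ normalizer (closure (conjugatesBy T K) : Set G) := by
  refine le_normalizer_closure_iff.2 ?_
  rintro c hc _ ⟨a, ha, b, hb, rfl⟩
  exact subset_closure ⟨a, ha, c * b, mul_mem hc hb, by group⟩

theorem closure_conjugatesBy_le {T : Set G} {A K : Subgroup G} (hT : T ⊆ A)
    (hK : K ≤ normalizer (A : Set G)) : closure (conjugatesBy T K) ≤ A := by
  refine (closure_le _).2 ?_
  rintro _ ⟨a, ha, b, hb, rfl⟩
  exact (hK hb a).1 (hT ha)

theorem closure_le_closure_conjugatesBy_sup {S : Set G} {A B : Subgroup G}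
    (hS : S ⊆ (A : Set G) ∪ B) :
    closure S ≤ closure (conjugatesBy (S ∩ A) (closure (S ∩ B))) ⊔ closure (S ∩ B) := by
  refine (closure_le _).2 fun s hs => ?_
  rcases hS hs with hsA | hsB
  · exact mem_sup_left (subset_closure (subset_conjugatesBy _ _ ⟨hs, hsA⟩))
  · exact mem_sup_right (subset_closure ⟨hs, hsB⟩)

end Subgroup

open Subgroup Pointwise in
theorem stmt_0_general {G : Type*} [Group G] (A B : Subgroup G)
    (hnorm : B ≤ Subgroup.normalizer (A : Set G))
    (hint : A ⊓ B = ⊥)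
    (φA φB : G → G)
    (hφ : ∀ g : G, φA g ∈ A ∧ φB g ∈ B ∧ g = φA g * φB g)
    (S : Set G) (hS : S ⊆ (A : Set G) ∪ (B : Set G)) :
    ∀ g ∈ Subgroup.closure S,
      φA g ∈ Subgroup.closure
          {x | ∃ a ∈ S ∩ (A : Set G), ∃ b ∈ Subgroup.closure (S ∩ (B : Set G)),
            x = b * a * b⁻¹} ∧
      φB g ∈ Subgroup.closure (S ∩ (B : Set G)) := by
  intro g hg
  set K := closure (S ∩ (B : Set G))
  set H := closure (conjugatesBy (S ∩ (A : Set G)) K)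
  have hKB : K ≤ B := (closure_le _).2 Set.inter_subset_right
  have hHA : H ≤ A := closure_conjugatesBy_le Set.inter_subset_right (hKB.trans hnorm)
  obtain ⟨h, hh, k, hk, rfl⟩ : g ∈ (H : Set G) * (K : Set G) := by
    rw [← coe_mul_of_right_le_normalizer_left H K (le_normalizer_closure_conjugatesBy _ _)]
    exact closure_le_closure_conjugatesBy_sup hS hg
  obtain ⟨hφA, hφB⟩ := eq_and_eq_of_mul_eq_mul (disjoint_iff.2 hint)
    (hφ _).1 (hHA hh) (hφ _).2.1 (hKB hk) (hφ _).2.2.symm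
  rw [hφA, hφB]
  exact ⟨hh, hk⟩

/-- Let `G = [AB]` be an inner semidirect product of subgroups `A, B ≤ G`
(`B` normalizes `A`, `A ∩ B = {e}`, `G = AB`), and let `φA, φB` assign to each `g ∈ G`
the unique `a ∈ A` and `b ∈ B` with `g = a * b`.  Then for every atomic subset `S ⊆ G`
(i.e. `S ⊆ A ∪ B`) and every `g ∈ ⟨S⟩`, one has
`φA g ∈ ⟨(S ∩ A)^{⟨S ∩ B⟩}⟩` and `φB g ∈ ⟨S ∩ B⟩`. -/
theorem stmt_0 {G : Type*} [Group G] (A B : Subgroup G)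
    (hnorm : B ≤ Subgroup.normalizer (A : Set G))
    (hint : A ⊓ B = ⊥)
    (hprod : ∀ g : G, ∃ a ∈ A, ∃ b ∈ B, g = a * b)
    (φA φB : G → G)
    (hφ : ∀ g : G, φA g ∈ A ∧ φB g ∈ B ∧ g = φA g * φB g)
    (S : Set G) (hS : S ⊆ (A : Set G) ∪ (B : Set G)) :
    ∀ g ∈ Subgroup.closure S,
      φA g ∈ Subgroup.closure
          {x | ∃ a ∈ S ∩ (A : Set G), ∃ b ∈ Subgroup.closure (S ∩ (B : Set G)),
            x = b * a * b⁻¹} ∧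
      φB g ∈ Subgroup.closure (S ∩ (B : Set G)) :=
  stmt_0_general A B hnorm hint φA φB hφ S hS
end

section
/- Let G be a group with subgroups A, B ≤ G such that B normalizes A, A ∩ B = {e}, and G = AB (inner semidirect product G = [AB]), and let φ_A : G → A assign to each g ∈ G the unique a ∈ A with g ∈ aB. Then for every atomic subset S ⊆ G, the image φ_A(⟨S⟩) = { a ∈ A : ∃ g ∈ ⟨S⟩, ∃ b ∈ B, g = a·b } equals ⟨S⟩ ∩ A. -/
/-! Since `B` normalizes `A`, for any subgroup `H` the part `H ⊓ B` normalizes `H ⊓ A`, so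
`(H ⊓ A) ⊔ (H ⊓ B)` is the set of products `(H ⊓ A) * (H ⊓ B)`. For `H = ⟨S⟩` with `S` atomic this
join contains `S`, hence is all of `⟨S⟩`: every `g ∈ ⟨S⟩` factors as `a * b` with `a ∈ ⟨S⟩ ∩ A`.
As `A ∩ B = {e}` the factorization is unique, so `φ_A g` is that `a`. -/

namespace Subgroup

variable {G : Type*} [Group G]

theorem inf_le_normalizer_inf {A B : Subgroup G} (hnorm : B ≤ normalizer (A : Set G))
    (H : Subgroup G) : H ⊓ B ≤ normalizer ((H ⊓ A : Subgroup G) : Set G) :=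
  (inf_le_inf le_normalizer hnorm).trans inf_normalizer_le_normalizer_inf

theorem exists_mul_eq_of_mem_closure {A B : Subgroup G} (hnorm : B ≤ normalizer (A : Set G))
    {S : Set G} (hS : S ⊆ (A : Set G) ∪ (B : Set G)) {g : G} (hg : g ∈ closure S) :
    ∃ a ∈ closure S ⊓ A, ∃ b ∈ closure S ⊓ B, a * b = g := by
  have hS_le : closure S ≤ (closure S ⊓ A) ⊔ (closure S ⊓ B) := by
    refine closure_le _ |>.mpr fun s hs => ?_
    rcases hS hs with hA | hB
    · exact mem_sup_left ⟨subset_closure hs, hA⟩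
    · exact mem_sup_right ⟨subset_closure hs, hB⟩
  have hg' : g ∈ (((closure S ⊓ A) ⊔ (closure S ⊓ B) : Subgroup G) : Set G) := hS_le hg
  rw [coe_mul_of_right_le_normalizer_left _ _ (inf_le_normalizer_inf hnorm _)] at hg'
  exact hg'

theorem eq_of_mul_eq_mul_of_disjoint {A B : Subgroup G} (h : Disjoint A B) {a a' b b' : G}
    (ha : a ∈ A) (ha' : a' ∈ A) (hb : b ∈ B) (hb' : b' ∈ B) (heq : a * b = a' * b') : a = a' :=
  congrArg (fun p : A × B => (p.1 : G))
    (mul_injective_of_disjoint h (a₁ := (⟨a, ha⟩, ⟨b, hb⟩)) (a₂ := (⟨a', ha'⟩, ⟨b', hb'⟩)) heq)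

end Subgroup

theorem stmt_2_general {G : Type*} [Group G] (A B : Subgroup G)
    (hnorm : B ≤ Subgroup.normalizer (A : Set G))
    (hint : A ⊓ B = ⊥)
    (S : Set G) (hS : S ⊆ (A : Set G) ∪ (B : Set G)) :
    {a : G | a ∈ A ∧ ∃ g ∈ Subgroup.closure S, ∃ b ∈ B, g = a * b} =
      ((Subgroup.closure S ⊓ A : Subgroup G) : Set G) := by
  ext a
  constructor
  · rintro ⟨haA, g, hg, b, hbB, rfl⟩
    obtain ⟨a', ha', b', hb', heq⟩ := Subgroup.exists_mul_eq_of_mem_closure hnorm hS hg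
    obtain rfl : a' = a :=
      Subgroup.eq_of_mul_eq_mul_of_disjoint (disjoint_iff.mpr hint) ha'.2 haA hb'.2 hbB heq
    exact ha'
  · rintro ⟨haS, haA⟩
    exact ⟨haA, a, haS, 1, one_mem _, (mul_one a).symm⟩

/-- Let `G = [AB]` be an inner semidirect product of subgroups `A, B ≤ G`,
and let `φ_A : G → A` assign to each `g` the unique `a ∈ A` with `g ∈ aB`.  Then for every
atomic subset `S ⊆ G`, the image `φ_A(⟨S⟩) = { a ∈ A | ∃ g ∈ ⟨S⟩, ∃ b ∈ B, g = a·b }`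
equals `⟨S⟩ ∩ A`. -/
theorem stmt_2 {G : Type*} [Group G] (A B : Subgroup G)
    (hnorm : B ≤ Subgroup.normalizer (A : Set G))
    (hint : A ⊓ B = ⊥)
    (hprod : ∀ g : G, ∃ a ∈ A, ∃ b ∈ B, g = a * b)
    (S : Set G) (hS : S ⊆ (A : Set G) ∪ (B : Set G)) :
    {a : G | a ∈ A ∧ ∃ g ∈ Subgroup.closure S, ∃ b ∈ B, g = a * b} =
      ((Subgroup.closure S ⊓ A : Subgroup G) : Set G) :=
  stmt_2_general A B hnorm hint S hS
end

section
/- Let G be a group with subgroups A, B ≤ G such that B normalizes A, A ∩ B = {e}, and G = AB (inner semidirect product G = [AB]). Then for every atomic subset S ⊆ G, the subgroup ⟨S⟩ ∩ B equals ⟨S ∩ B⟩, the subgroup generated by the elements of S lying in B. -/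
/-!
Since `S ⊆ A ∪ B`, the subgroup `⟨S⟩` lies in `A ⊔ ⟨S ∩ B⟩`. As `⟨S ∩ B⟩ ≤ B` normalizes `A`,
this join is the set product `A * ⟨S ∩ B⟩`, and Dedekind's modular law together with
`A ∩ B = 1` gives `(A * ⟨S ∩ B⟩) ∩ B = ⟨S ∩ B⟩`.
-/

open scoped Pointwise

namespace Subgroup

variable {G : Type*} [Group G]

theorem closure_le_sup_closure_inter {A B : Subgroup G} {S : Set G}
    (hS : S ⊆ (A : Set G) ∪ (B : Set G)) :
    closure S ≤ A ⊔ closure (S ∩ (B : Set G)) := by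
  refine (closure_le _).2 fun s hs => ?_
  rcases hS hs with hA | hB
  · exact mem_sup_left hA
  · exact mem_sup_right (subset_closure ⟨hs, hB⟩)

theorem sup_inf_eq_of_le_normalizer {A B C : Subgroup G} (hCA : C ≤ normalizer (A : Set G))
    (hCB : C ≤ B) (hAB : A ⊓ B = ⊥) :
    (A ⊔ C) ⊓ B = C := by
  apply SetLike.coe_injective
  rw [coe_inf, coe_mul_of_right_le_normalizer_left A C hCA, Set.inter_comm,
    ← inf_mul_assoc B A C hCB, inf_comm, hAB, coe_bot, Set.singleton_one, one_mul]

end Subgroup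

theorem stmt_3_general {G : Type*} [Group G] (A B : Subgroup G)
    (hnorm : B ≤ Subgroup.normalizer (A : Set G))
    (hint : A ⊓ B = ⊥)
    (S : Set G) (hS : S ⊆ (A : Set G) ∪ (B : Set G)) :
    Subgroup.closure S ⊓ B = Subgroup.closure (S ∩ (B : Set G)) := by
  set C := Subgroup.closure (S ∩ (B : Set G))
  have hCB : C ≤ B := (Subgroup.closure_le B).2 Set.inter_subset_right
  refine le_antisymm ?_ (le_inf (Subgroup.closure_mono Set.inter_subset_left) hCB)
  calc Subgroup.closure S ⊓ B ≤ (A ⊔ C) ⊓ B :=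
        inf_le_inf_right B (Subgroup.closure_le_sup_closure_inter hS)
    _ = C := Subgroup.sup_inf_eq_of_le_normalizer (hCB.trans hnorm) hCB hint

/-- Let `G = [AB]` be an inner semidirect product of subgroups `A, B ≤ G`.
Then for every atomic subset `S ⊆ G`, the subgroup `⟨S⟩ ∩ B` equals `⟨S ∩ B⟩`. -/
theorem stmt_3 {G : Type*} [Group G] (A B : Subgroup G)
    (hnorm : B ≤ Subgroup.normalizer (A : Set G))
    (hint : A ⊓ B = ⊥)
    (hprod : ∀ g : G, ∃ a ∈ A, ∃ b ∈ B, g = a * b)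
    (S : Set G) (hS : S ⊆ (A : Set G) ∪ (B : Set G)) :
    Subgroup.closure S ⊓ B = Subgroup.closure (S ∩ (B : Set G)) :=
  stmt_3_general A B hnorm hint S hS
end

section
/- Let G be a group with subgroups A, B ≤ G such that B normalizes A, A ∩ B = {e}, and G = AB (inner semidirect product G = [AB]). Then every atomically generated subgroup H ≤ G (i.e., H = ⟨S⟩ for some atomic S ⊆ G) is the inner semidirect product of H ∩ A and H ∩ B: that is, H ∩ B normalizes H ∩ A, (H ∩ A) ∩ (H ∩ B) = {e}, and every h ∈ H can be written as h = a·b with a ∈ H ∩ A and b ∈ H ∩ B. -/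
/-!
The subgroups `H ⊓ A` and `H ⊓ B` of `H = ⟨S⟩` together contain every generator in `S`,
so they generate `H`. Since `H ⊓ B` normalizes `H ⊓ A`, the subgroup they generate is the
set of products `(H ⊓ A) * (H ⊓ B)`, which gives the factorization; the other two properties
are inherited directly from `B` normalizing `A` and `A ⊓ B = ⊥`.
-/

namespace Subgroup

variable {G : Type*} [Group G]

theorem closure_eq_inf_sup_inf_of_subset_union {A B : Subgroup G} {S : Set G}
    (hS : S ⊆ (A : Set G) ∪ (B : Set G)) :
    closure S = (closure S ⊓ A) ⊔ (closure S ⊓ B) := by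
  refine le_antisymm ((closure_le _).mpr fun s hs => ?_) (sup_le inf_le_left inf_le_left)
  rcases hS hs with hsA | hsB
  · exact mem_sup_left ⟨subset_closure hs, hsA⟩
  · exact mem_sup_right ⟨subset_closure hs, hsB⟩

end Subgroup

theorem stmt_5_general {G : Type*} [Group G] (A B : Subgroup G)
    (hnorm : B ≤ Subgroup.normalizer (A : Set G))
    (hint : A ⊓ B = ⊥)
    (S : Set G) (hS : S ⊆ (A : Set G) ∪ (B : Set G))
    (H : Subgroup G) (hH : H = Subgroup.closure S) :
    (∀ b ∈ H ⊓ B, ∀ a ∈ H ⊓ A, b * a * b⁻¹ ∈ H ⊓ A) ∧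
    (H ⊓ A) ⊓ (H ⊓ B) = ⊥ ∧
    (∀ h ∈ H, ∃ a ∈ H ⊓ A, ∃ b ∈ H ⊓ B, h = a * b) := by
  have hHnorm := Subgroup.inf_le_normalizer_inf hnorm H
  refine ⟨fun b hb a ha => (Subgroup.mem_normalizer_iff.mp (hHnorm hb) a).mp ha, ?_,
    fun h hh => ?_⟩
  · exact eq_bot_iff.mpr (hint ▸ inf_le_inf inf_le_right inf_le_right)
  · have hgen : H = H ⊓ A ⊔ H ⊓ B := by
      subst hH
      exact Subgroup.closure_eq_inf_sup_inf_of_subset_union hS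
    have hsup : h ∈ ((H ⊓ A ⊔ H ⊓ B : Subgroup G) : Set G) := hgen ▸ hh
    obtain ⟨a, ha, b, hb, rfl⟩ := Subgroup.coe_mul_of_right_le_normalizer_left _ _ hHnorm ▸ hsup
    exact ⟨a, ha, b, hb, rfl⟩

/-- Let `G = [AB]` be an inner semidirect product of subgroups `A, B ≤ G`.
Then every atomically generated subgroup `H = ⟨S⟩` (with `S ⊆ A ∪ B`) is the inner
semidirect product of `H ∩ A` and `H ∩ B`: `H ∩ B` normalizes `H ∩ A`,
`(H ∩ A) ∩ (H ∩ B) = {e}`, and every `h ∈ H` factors as `h = a·b` with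
`a ∈ H ∩ A`, `b ∈ H ∩ B`. -/
theorem stmt_5 {G : Type*} [Group G] (A B : Subgroup G)
    (hnorm : B ≤ Subgroup.normalizer (A : Set G))
    (hint : A ⊓ B = ⊥)
    (hprod : ∀ g : G, ∃ a ∈ A, ∃ b ∈ B, g = a * b)
    (S : Set G) (hS : S ⊆ (A : Set G) ∪ (B : Set G))
    (H : Subgroup G) (hH : H = Subgroup.closure S) :
    (∀ b ∈ H ⊓ B, ∀ a ∈ H ⊓ A, b * a * b⁻¹ ∈ H ⊓ A) ∧
    (H ⊓ A) ⊓ (H ⊓ B) = ⊥ ∧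
    (∀ h ∈ H, ∃ a ∈ H ⊓ A, ∃ b ∈ H ⊓ B, h = a * b) :=
  stmt_5_general A B hnorm hint S hS H hH
end

section
/- Let G be a group with subgroups A, B ≤ G such that B normalizes A, A ∩ B = {e}, and G = AB (inner semidirect product G = [AB], so in particular A ⊴ G). Let G act on a set X, and let ρ : X → X be an orbit-representative map of the restricted action A ↷ X. Then for all x, x' ∈ X: G·x = G·x' if and only if there exists b ∈ B such that ρ(x') = ρ(b·ρ(x)). -/
/-!
Write `ρ = ρ̄ ∘ q`. Since `ρ̄` is a section, `ρ x` lies in `A·x`, so `G·x = G·ρ(x)`, and `ρ` separates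
`A`-orbits. Hence `G·x = G·x'` says `x' = g·ρ(x)` for some `g ∈ G`; writing `g = ab` with `a ∈ A`,
`b ∈ B` this is `x' ∈ A·(b·ρ(x))`, i.e. `ρ(x') = ρ(b·ρ(x))`.
-/

open MulAction

namespace MulAction

variable {G X : Type*} [Group G] [MulAction G X]

theorem mem_orbit_iff_exists_mem_orbit_subgroup_smul {A B : Subgroup G}
    (hprod : ∀ g : G, ∃ a ∈ A, ∃ b ∈ B, g = a * b) {y z : X} :
    y ∈ orbit G z ↔ ∃ b ∈ B, y ∈ orbit A (b • z) := by
  constructor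
  · rintro ⟨g, rfl⟩
    obtain ⟨a, ha, b, hb, rfl⟩ := hprod g
    exact ⟨b, hb, ⟨a, ha⟩, (mul_smul a b z).symm⟩
  · rintro ⟨b, -, hy⟩
    rw [← orbit_smul (b : G) z]
    exact mem_orbit_of_mem_orbit_subgroup hy

section OrbitRepresentative

variable {A : Subgroup G} {ρbar : Quotient (orbitRel A X) → X}

theorem section_mk_mem_orbit (hsec : ∀ o, Quotient.mk (orbitRel A X) (ρbar o) = o) (y : X) :
    ρbar (Quotient.mk _ y) ∈ orbit A y :=
  orbitRel_apply.mp (Quotient.exact (hsec _))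

theorem section_mk_eq_section_mk_iff (hsec : ∀ o, Quotient.mk (orbitRel A X) (ρbar o) = o)
    {y z : X} : ρbar (Quotient.mk _ y) = ρbar (Quotient.mk _ z) ↔ y ∈ orbit A z := by
  rw [(Function.LeftInverse.injective hsec).eq_iff, Quotient.eq, orbitRel_apply]

end OrbitRepresentative

end MulAction

theorem stmt_14_general {G X : Type*} [Group G] [MulAction G X] (A B : Subgroup G)
    (hprod : ∀ g : G, ∃ a ∈ A, ∃ b ∈ B, g = a * b)
    (ρ : X → X)
    (ρbar : Quotient (MulAction.orbitRel A X) → X)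
    (hsec : ∀ o, Quotient.mk (MulAction.orbitRel A X) (ρbar o) = o)
    (hρ : ρ = ρbar ∘ Quotient.mk (MulAction.orbitRel A X)) :
    ∀ x x' : X,
      MulAction.orbit G x = MulAction.orbit G x' ↔
        ∃ b ∈ B, ρ x' = ρ (b • ρ x) := by
  subst hρ
  intro x x'
  have hx : orbit G (ρbar (Quotient.mk _ x)) = orbit G x :=
    orbit_eq_iff.mpr (mem_orbit_of_mem_orbit_subgroup (section_mk_mem_orbit hsec x))
  rw [eq_comm, orbit_eq_iff, ← hx, mem_orbit_iff_exists_mem_orbit_subgroup_smul hprod]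
  simp only [Function.comp_apply, section_mk_eq_section_mk_iff hsec]

/-- Let `G = [AB]` be an inner semidirect product of subgroups
`A, B ≤ G` (so `A ⊴ G`), let `G` act on `X`, and let `ρ : X → X` be an
orbit-representative map of the restricted action `A ↷ X` (i.e. `ρ = ρ̄ ∘ q` for a
section `ρ̄` of the `A`-orbit quotient map `q`).  Then for all `x, x' ∈ X`:
`G·x = G·x'` iff there exists `b ∈ B` with `ρ(x') = ρ(b·ρ(x))`. -/
theorem stmt_14 {G X : Type*} [Group G] [MulAction G X] (A B : Subgroup G)
    (hnorm : B ≤ Subgroup.normalizer (A : Set G))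
    (hint : A ⊓ B = ⊥)
    (hprod : ∀ g : G, ∃ a ∈ A, ∃ b ∈ B, g = a * b)
    (ρ : X → X)
    (ρbar : Quotient (MulAction.orbitRel A X) → X)
    (hsec : ∀ o, Quotient.mk (MulAction.orbitRel A X) (ρbar o) = o)
    (hρ : ρ = ρbar ∘ Quotient.mk (MulAction.orbitRel A X)) :
    ∀ x x' : X,
      MulAction.orbit G x = MulAction.orbit G x' ↔
        ∃ b ∈ B, ρ x' = ρ (b • ρ x) :=
  stmt_14_general A B hprod ρ ρbar hsec hρ
end

section
/- Every bijection f : ℤⁿ → ℤⁿ that preserves the Euclidean distance (i.e., ∑ᵢ (f(x)ᵢ − f(y)ᵢ)² = ∑ᵢ (xᵢ − yᵢ)² for all x, y ∈ ℤⁿ) is of the form f(x) = Rx + v for a unique matrix R ∈ O_n(ℤ) and a unique vector v ∈ ℤⁿ. In other words, the isometry group of ℤⁿ is the inner semidirect product of the group of translations { x ↦ x + v : v ∈ ℤⁿ } and the group of generalized rotations { x ↦ Rx : R ∈ O_n(ℤ) }. -/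
/-- Every bijection `f : ℤⁿ → ℤⁿ` preserving the Euclidean distance
(`∑ i, (f(x)ᵢ − f(y)ᵢ)² = ∑ i, (xᵢ − yᵢ)²`) is of the form `f(x) = Rx + v` for a unique
`R ∈ O_n(ℤ)` and a unique `v ∈ ℤⁿ`; i.e. the isometry group of `ℤⁿ` is the inner
semidirect product of translations and generalized rotations. -/
theorem stmt_15 (n : ℕ) (f : (Fin n → ℤ) → (Fin n → ℤ))
    (hbij : Function.Bijective f)
    (hiso : ∀ x y : Fin n → ℤ, ∑ i, (f x i - f y i) ^ 2 = ∑ i, (x i - y i) ^ 2) :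
    ∃! p : Matrix (Fin n) (Fin n) ℤ × (Fin n → ℤ),
      p.1.transpose * p.1 = 1 ∧ ∀ x, f x = p.1.mulVec x + p.2 := by
  -- `f` preserves inner products after recentering at `f 0`
  have hip : ∀ x y : Fin n → ℤ,
      ∑ i, (f x i - f 0 i) * (f y i - f 0 i) = ∑ i, x i * y i := by
    intro x y
    have h1 := hiso x y
    have h2 := hiso x 0
    have h3 := hiso y 0
    simp only [Pi.zero_apply, sub_zero] at h2 h3
    have hsum : 2 * ∑ i, (f x i - f 0 i) * (f y i - f 0 i)
        = ∑ i, (f x i - f 0 i) ^ 2 + ∑ i, (f y i - f 0 i) ^ 2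
          - ∑ i, (f x i - f y i) ^ 2 := by
      rw [Finset.mul_sum, ← Finset.sum_add_distrib, ← Finset.sum_sub_distrib]
      exact Finset.sum_congr rfl fun i _ => by ring
    have hsum' : 2 * ∑ i, x i * y i
        = ∑ i, x i ^ 2 + ∑ i, y i ^ 2 - ∑ i, (x i - y i) ^ 2 := by
      rw [Finset.mul_sum, ← Finset.sum_add_distrib, ← Finset.sum_sub_distrib]
      exact Finset.sum_congr rfl fun i _ => by ring
    linarith
  set R : Matrix (Fin n) (Fin n) ℤ :=
    Matrix.of fun i j => f (Pi.single j 1) i - f 0 i with hR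
  have hsingle : ∀ (j : Fin n) (x : Fin n → ℤ),
      ∑ i, (Pi.single j 1 : Fin n → ℤ) i * x i = x j := by
    intro j x
    simp [Pi.single_apply, Finset.sum_ite_eq]
  have hRT : R.transpose * R = 1 := by
    ext j k
    rw [Matrix.mul_apply, Matrix.one_apply]
    simp only [Matrix.transpose_apply, hR, Matrix.of_apply]
    rw [hip (Pi.single j 1) (Pi.single k 1), hsingle]
    simp [Pi.single_apply, eq_comm]
  have hRR : R * R.transpose = 1 := mul_eq_one_comm.mp hRT
  have hTg : ∀ x : Fin n → ℤ, R.transpose.mulVec (fun i => f x i - f 0 i) = x := by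
    intro x
    funext j
    rw [Matrix.mulVec, dotProduct]
    simp only [Matrix.transpose_apply, hR, Matrix.of_apply]
    rw [hip (Pi.single j 1) x, hsingle]
  have hfx : ∀ x, f x = R.mulVec x + f 0 := by
    intro x
    have : R.mulVec (R.transpose.mulVec (fun i => f x i - f 0 i)) = R.mulVec x := by
      rw [hTg]
    rw [Matrix.mulVec_mulVec, hRR, Matrix.one_mulVec] at this
    funext i
    have h := congrFun this i
    have hk : f x i - f 0 i = R.mulVec x i := h
    simp only [Pi.add_apply]
    linarith [hk]
  refine ⟨(R, f 0), ⟨hRT, hfx⟩, ?_⟩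
  rintro ⟨S, w⟩ ⟨hS1, hS2⟩
  have hw : w = f 0 := by
    have := hS2 0
    simpa [Matrix.mulVec_zero] using this.symm
  have hSR : S = R := by
    ext i j
    have h := (hS2 (Pi.single j 1)).symm.trans (hfx (Pi.single j 1))
    rw [hw] at h
    have h2 : S.mulVec (Pi.single j 1) = R.mulVec (Pi.single j 1) := add_right_cancel h
    have h3 := congrFun h2 i
    simpa [Matrix.mulVec, dotProduct, Pi.single_apply] using h3
  simp [hSR, hw]
end
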